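/- For every t in the lattice Λ such that min_{i∈{1,2,3}} f_i(t) ≥ max_{j∈{1,…,6}} g_j(t), the SU(3) triple multiplicity satisfies c(t) = 1 + min_{i} f_i(t) − max_{j} g_j(t). -/
import Mathlib


/-- A BZ triangle datum: coordinates `(y₁,y₂,y₃,z₁,z₂,z₃,z₄,z₅,z₆)` indexed `0,…,8`.
`IsBZ T` says all coordinates are nonnegative and `z₁−z₄ = z₅−z₂ = z₃−z₆`. -/
def IsBZ (T : Fin 9 → ℤ) : Prop :=
  (∀ i, 0 ≤ T i) ∧ T 3 - T 6 = T 7 - T 4 ∧ T 7 - T 4 = T 5 - T 8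

/-- projection to `(ℓ₁,ℓ₂,m₁,m₂,n₁,n₂)`. -/
def pr (T : Fin 9 → ℤ) : Fin 6 → ℤ :=
  ![T 1 + T 6, T 2 + T 7, T 2 + T 8, T 0 + T 3, T 0 + T 4, T 1 + T 5]

/-- the SU(3) triple multiplicity: number of BZ triangles lying over `t`. -/
noncomputable def c (t : Fin 6 → ℤ) : ℕ :=
  Nat.card {T : Fin 9 → ℤ // IsBZ T ∧ pr T = t}

/-- membership in the lattice Λ : `ℓ₁+m₁+n₁ ≡ ℓ₂+m₂+n₂ (mod 3)`. -/
def inLattice (t : Fin 6 → ℤ) : Prop :=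
  (t 0 + t 2 + t 4) ≡ (t 1 + t 3 + t 5) [ZMOD 3]

def ω (t : Fin 6 → ℚ) : ℚ := (t 0 + t 2 + t 4 - t 1 - t 3 - t 5) / 3

/-- the linear forms `f₁, f₂, f₃`. -/
def f : Fin 3 → (Fin 6 → ℚ) → ℚ :=
  ![fun _ => 0, fun t => t 0 - t 3 - ω t, fun t => t 1 - t 4 + ω t]

/-- the linear forms `g₁, …, g₆`. -/
def g : Fin 6 → (Fin 6 → ℚ) → ℚ :=
  ![fun t => -t 3, fun t => -t 4, fun t => t 0 - t 3 - t 5 - ω t,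
    fun t => -t 3 - ω t, fun t => -t 4 + ω t, fun t => t 1 - t 2 - t 4 + ω t]

def toQ (t : Fin 6 → ℤ) : Fin 6 → ℚ := fun i => (t i : ℚ)

lemma forall_fin9 {P : Fin 9 → Prop} (h0 : P 0) (h1 : P 1) (h2 : P 2) (h3 : P 3)
    (h4 : P 4) (h5 : P 5) (h6 : P 6) (h7 : P 7) (h8 : P 8) : ∀ i, P i := by
  intro i; fin_cases i <;> assumption

lemma forall_fin6 {P : Fin 6 → Prop} (h0 : P 0) (h1 : P 1) (h2 : P 2) (h3 : P 3)
    (h4 : P 4) (h5 : P 5) : ∀ i, P i := by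
  intro i; fin_cases i <;> assumption

lemma bz_unpack (T : Fin 9 → ℤ) (t : Fin 6 → ℤ) (h : pr T = t) :
    T 1 + T 6 = t 0 ∧ T 2 + T 7 = t 1 ∧ T 2 + T 8 = t 2 ∧ T 0 + T 3 = t 3 ∧
      T 0 + T 4 = t 4 ∧ T 1 + T 5 = t 5 :=
  ⟨congrFun h 0, congrFun h 1, congrFun h 2, congrFun h 3, congrFun h 4, congrFun h 5⟩

lemma inf3_eq (F : Fin 3 → ℚ) :
    Finset.univ.inf' Finset.univ_nonempty F = min (F 0) (min (F 1) (F 2)) := by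
  apply le_antisymm
  · exact le_min (Finset.inf'_le _ (Finset.mem_univ _))
      (le_min (Finset.inf'_le _ (Finset.mem_univ _)) (Finset.inf'_le _ (Finset.mem_univ _)))
  · apply Finset.le_inf'
    intro i _
    fin_cases i
    · exact min_le_left _ _
    · exact le_trans (min_le_right _ _) (min_le_left _ _)
    · exact le_trans (min_le_right _ _) (min_le_right _ _)

lemma sup6_eq (F : Fin 6 → ℚ) :
    Finset.univ.sup' Finset.univ_nonempty F
      = max (F 0) (max (F 1) (max (F 2) (max (F 3) (max (F 4) (F 5))))) := by
  apply le_antisymm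
  · apply Finset.sup'_le
    intro i _
    fin_cases i
    · exact le_max_left _ _
    · exact le_trans (le_max_left _ _) (le_max_right _ _)
    · exact le_trans (le_trans (le_max_left _ _) (le_max_right _ _)) (le_max_right _ _)
    · exact le_trans (le_trans (le_trans (le_max_left _ _) (le_max_right _ _)) (le_max_right _ _)) (le_max_right _ _)
    · exact le_trans (le_trans (le_trans (le_trans (le_max_left _ _) (le_max_right _ _)) (le_max_right _ _)) (le_max_right _ _)) (le_max_right _ _)
    · exact le_trans (le_trans (le_trans (le_trans (le_max_right _ _) (le_max_right _ _)) (le_max_right _ _)) (le_max_right _ _)) (le_max_right _ _)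
  · exact max_le (Finset.le_sup' _ (Finset.mem_univ _))
      (max_le (Finset.le_sup' _ (Finset.mem_univ _))
        (max_le (Finset.le_sup' _ (Finset.mem_univ _))
          (max_le (Finset.le_sup' _ (Finset.mem_univ _))
            (max_le (Finset.le_sup' _ (Finset.mem_univ _)) (Finset.le_sup' _ (Finset.mem_univ _))))))

/-- the candidate BZ triangle over `t` with parameter `k`. -/
def bld (t : Fin 6 → ℤ) (w k : ℤ) : Fin 9 → ℤ :=
  ![k, k + t 0 - t 3 - w, k + t 1 - t 4 + w, t 3 - k, t 4 - k,
    t 5 - k - t 0 + t 3 + w, t 3 + w - k, t 4 - w - k, t 2 - k - t 1 + t 4 - w]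

lemma mem_icc_of_fiber (t : Fin 6 → ℤ) (w : ℤ)
    (hw : t 0 + t 2 + t 4 - t 1 - t 3 - t 5 = 3 * w)
    (T : Fin 9 → ℤ) (hBZ : IsBZ T) (hpr : pr T = t) :
    T 0 ∈ Set.Icc (-(min 0 (min (t 0 - t 3 - w) (t 1 - t 4 + w))))
        (-(max (-t 3) (max (-t 4) (max (t 0 - t 3 - t 5 - w)
          (max (-t 3 - w) (max (-t 4 + w) (t 1 - t 2 - t 4 + w))))))) := by
  obtain ⟨e0, e1, e2, e3, e4, e5⟩ := bz_unpack T t hpr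
  have c1 := hBZ.2.1
  have c2 := hBZ.2.2
  have n0 := hBZ.1 0; have n1 := hBZ.1 1; have n2 := hBZ.1 2
  have n3 := hBZ.1 3; have n4 := hBZ.1 4; have n5 := hBZ.1 5
  have n6 := hBZ.1 6; have n7 := hBZ.1 7; have n8 := hBZ.1 8
  refine Set.mem_Icc.mpr ⟨?_, ?_⟩ <;> omega

lemma bld_mem_fiber (t : Fin 6 → ℤ) (w : ℤ)
    (hw : t 0 + t 2 + t 4 - t 1 - t 3 - t 5 = 3 * w) (k : ℤ)
    (hk : k ∈ Set.Icc (-(min 0 (min (t 0 - t 3 - w) (t 1 - t 4 + w))))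
        (-(max (-t 3) (max (-t 4) (max (t 0 - t 3 - t 5 - w)
          (max (-t 3 - w) (max (-t 4 + w) (t 1 - t 2 - t 4 + w)))))))) :
    IsBZ (bld t w k) ∧ pr (bld t w k) = t := by
  rw [Set.mem_Icc] at hk
  refine ⟨⟨?_, ?_, ?_⟩, ?_⟩
  · refine forall_fin9 ?_ ?_ ?_ ?_ ?_ ?_ ?_ ?_ ?_
    · show (0:ℤ) ≤ k; omega
    · show (0:ℤ) ≤ k + t 0 - t 3 - w; omega
    · show (0:ℤ) ≤ k + t 1 - t 4 + w; omega
    · show (0:ℤ) ≤ t 3 - k; omega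
    · show (0:ℤ) ≤ t 4 - k; omega
    · show (0:ℤ) ≤ t 5 - k - t 0 + t 3 + w; omega
    · show (0:ℤ) ≤ t 3 + w - k; omega
    · show (0:ℤ) ≤ t 4 - w - k; omega
    · show (0:ℤ) ≤ t 2 - k - t 1 + t 4 - w; omega
  · show (t 3 - k) - (t 3 + w - k) = (t 4 - w - k) - (t 4 - k); ring
  · show (t 4 - w - k) - (t 4 - k) = (t 5 - k - t 0 + t 3 + w) - (t 2 - k - t 1 + t 4 - w); omega
  · funext i
    revert i
    refine forall_fin6 ?_ ?_ ?_ ?_ ?_ ?_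
    · show (k + t 0 - t 3 - w) + (t 3 + w - k) = t 0; ring
    · show (k + t 1 - t 4 + w) + (t 4 - w - k) = t 1; ring
    · show (k + t 1 - t 4 + w) + (t 2 - k - t 1 + t 4 - w) = t 2; ring
    · show k + (t 3 - k) = t 3; ring
    · show k + (t 4 - k) = t 4; ring
    · show (k + t 0 - t 3 - w) + (t 5 - k - t 0 + t 3 + w) = t 5; ring

/-- the fiber over `t` is in bijection with an integer interval. -/
noncomputable def fiberEquiv (t : Fin 6 → ℤ) (w : ℤ)
    (hw : t 0 + t 2 + t 4 - t 1 - t 3 - t 5 = 3 * w) :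
    {T : Fin 9 → ℤ // IsBZ T ∧ pr T = t} ≃
      (Set.Icc (-(min 0 (min (t 0 - t 3 - w) (t 1 - t 4 + w))))
        (-(max (-t 3) (max (-t 4) (max (t 0 - t 3 - t 5 - w)
          (max (-t 3 - w) (max (-t 4 + w) (t 1 - t 2 - t 4 + w)))))))) where
  toFun x := ⟨x.1 0, mem_icc_of_fiber t w hw x.1 x.2.1 x.2.2⟩
  invFun k := ⟨bld t w k.1, bld_mem_fiber t w hw k.1 k.2⟩
  left_inv := by
    rintro ⟨T, hBZ, hpr⟩
    obtain ⟨e0, e1, e2, e3, e4, e5⟩ := bz_unpack T t hpr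
    have c1 := hBZ.2.1
    have c2 := hBZ.2.2
    apply Subtype.ext
    funext i
    revert i
    refine forall_fin9 ?_ ?_ ?_ ?_ ?_ ?_ ?_ ?_ ?_
    · show T 0 = T 0; rfl
    · show T 0 + t 0 - t 3 - w = T 1; omega
    · show T 0 + t 1 - t 4 + w = T 2; omega
    · show t 3 - T 0 = T 3; omega
    · show t 4 - T 0 = T 4; omega
    · show t 5 - T 0 - t 0 + t 3 + w = T 5; omega
    · show t 3 + w - T 0 = T 6; omega
    · show t 4 - w - T 0 = T 7; omega
    · show t 2 - T 0 - t 1 + t 4 - w = T 8; omega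
  right_inv := by
    rintro ⟨k, hk⟩
    rfl

theorem stmt2 (t : Fin 6 → ℤ) (ht : inLattice t)
    (h : Finset.univ.sup' Finset.univ_nonempty (fun j : Fin 6 => g j (toQ t)) ≤
         Finset.univ.inf' Finset.univ_nonempty (fun i : Fin 3 => f i (toQ t))) :
    (c t : ℚ) = 1 + Finset.univ.inf' Finset.univ_nonempty (fun i : Fin 3 => f i (toQ t))
      - Finset.univ.sup' Finset.univ_nonempty (fun j : Fin 6 => g j (toQ t)) := by
  obtain ⟨w', hw'⟩ := Int.ModEq.dvd ht
  set w : ℤ := -w' with hwdef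
  have hw : t 0 + t 2 + t 4 - t 1 - t 3 - t 5 = 3 * w := by omega
  have hω : ω (toQ t) = (w : ℚ) := by
    have : ((t 0 : ℚ) + t 2 + t 4 - t 1 - t 3 - t 5) = 3 * (w : ℚ) := by
      exact_mod_cast congrArg (Int.cast : ℤ → ℚ) hw
    unfold ω toQ
    linarith
  set FI : ℤ := min 0 (min (t 0 - t 3 - w) (t 1 - t 4 + w)) with hFI
  set GS : ℤ := max (-t 3) (max (-t 4) (max (t 0 - t 3 - t 5 - w)
      (max (-t 3 - w) (max (-t 4 + w) (t 1 - t 2 - t 4 + w))))) with hGS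
  have hinf : Finset.univ.inf' Finset.univ_nonempty (fun i : Fin 3 => f i (toQ t))
      = (FI : ℚ) := by
    rw [inf3_eq]
    have h0 : f 0 (toQ t) = 0 := rfl
    have h1 : f 1 (toQ t) = toQ t 0 - toQ t 3 - ω (toQ t) := rfl
    have h2 : f 2 (toQ t) = toQ t 1 - toQ t 4 + ω (toQ t) := rfl
    rw [h0, h1, h2, hω, hFI]
    unfold toQ
    push_cast
    ring_nf
  have hsup : Finset.univ.sup' Finset.univ_nonempty (fun j : Fin 6 => g j (toQ t))
      = (GS : ℚ) := by
    rw [sup6_eq]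
    have h0 : g 0 (toQ t) = -toQ t 3 := rfl
    have h1 : g 1 (toQ t) = -toQ t 4 := rfl
    have h2 : g 2 (toQ t) = toQ t 0 - toQ t 3 - toQ t 5 - ω (toQ t) := rfl
    have h3 : g 3 (toQ t) = -toQ t 3 - ω (toQ t) := rfl
    have h4 : g 4 (toQ t) = -toQ t 4 + ω (toQ t) := rfl
    have h5 : g 5 (toQ t) = toQ t 1 - toQ t 2 - toQ t 4 + ω (toQ t) := rfl
    rw [h0, h1, h2, h3, h4, h5, hω, hGS]
    unfold toQ
    push_cast
    ring_nf
  rw [hinf, hsup] at h ⊢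
  have hle : GS ≤ FI := by exact_mod_cast h
  have hcard : c t = (FI - GS + 1).toNat := by
    have hcc := Nat.card_congr (fiberEquiv t w hw)
    rw [c, hcc, Nat.card_eq_card_toFinset]
    simp only [Set.toFinset_Icc, Int.card_Icc]
    congr 1
    omega
  rw [hcard]
  have hnn : (0:ℤ) ≤ FI - GS + 1 := by omega
  have hq : (((FI - GS + 1).toNat : ℕ) : ℚ) = (FI : ℚ) - GS + 1 := by
    rw [← Int.cast_natCast, Int.toNat_of_nonneg hnn]
    push_cast
    ring
  rw [hq]
  ring
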